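/- arXiv:1301.4047 — 7 statements merged into one kernel-verified Lean document; each statement's English description precedes it below -/
import Mathlib

section
/- Let n ≥ 1 be even. The number of triples (i,j,s) with 1 ≤ i < j ≤ n, 1 ≤ s ≤ n and n + 2(s - i - j) + 1 = 1 equals n(3n-2)/8. -/
/-!
Write `n = 2m`. The condition says `s = i + j - m`, so the triples correspond to the pairs
`i < j` in `[1, 2m]` with `m + 1 ≤ i + j ≤ 3m`. Under `(i, j) ↦ (j, i)` this band of ordered
pairs is symmetric and contains exactly `m` diagonal pairs, so twice our count plus `m` is the
size of the band. Summing over `i`, the band has `∑_{i ≤ m} (m + i) + ∑_{i > m} (3m - i) = 3m²`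
elements, so the count is `(3m² - m)/2 = n(3n - 2)/8`.
-/

open Finset

theorem Int.two_mul_sum_Icc_id {a b : ℤ} (h : a - 1 ≤ b) :
    2 * ∑ i ∈ Icc a b, i = (b - a + 1) * (a + b) := by
  induction b, h using Int.leInduction with
  | base => simp
  | succ b hb ih =>
    rw [← insert_Icc_right_eq_Icc_add_one (by omega), sum_insert (by simp), mul_add, ih]
    ring

theorem card_filter_product_eq_sum {α β : Type*} (s : Finset α) (t : Finset β)
    (p : α × β → Prop) [DecidablePred p] :
    #((s ×ˢ t).filter p) = ∑ a ∈ s, #(t.filter fun b => p (a, b)) := by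
  simp only [card_filter, sum_product]

theorem two_mul_card_filter_lt_add_card_filter_eq {α : Type*} [LinearOrder α]
    (S : Finset (α × α)) (hS : ∀ p ∈ S, p.swap ∈ S) :
    2 * #(S.filter fun p => p.1 < p.2) + #(S.filter fun p => p.1 = p.2) = #S := by
  have hswap : #(S.filter fun p => p.2 < p.1) = #(S.filter fun p => p.1 < p.2) :=
    card_nbij' Prod.swap Prod.swap
      (fun p hp => by rw [mem_coe, mem_filter] at hp ⊢; exact ⟨hS p hp.1, hp.2⟩)
      (fun p hp => by rw [mem_coe, mem_filter] at hp ⊢; exact ⟨hS p hp.1, hp.2⟩)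
      (fun p _ => p.swap_swap) (fun p _ => p.swap_swap)
  have htrich : #S = #(S.filter fun p => p.1 < p.2) + #(S.filter fun p => p.1 = p.2)
      + #(S.filter fun p => p.2 < p.1) := by
    rw [← card_union_of_disjoint, ← card_union_of_disjoint, ← filter_or, ← filter_or,
      filter_true_of_mem fun p _ => or_assoc.2 (lt_trichotomy p.1 p.2)]
    · rw [← filter_or]
      exact disjoint_filter.2 fun (p : α × α) _ (h : p.1 < p.2 ∨ p.1 = p.2) =>
        not_lt.2 (le_of_lt_or_eq h)
    · exact disjoint_filter.2 fun (p : α × α) _ (h : p.1 < p.2) => ne_of_lt h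
  omega

noncomputable def sumBand (m : ℕ) : Finset (ℤ × ℤ) :=
  (Icc (1 : ℤ) (2 * m) ×ˢ Icc (1 : ℤ) (2 * m)).filter fun p =>
    m + 1 ≤ p.1 + p.2 ∧ p.1 + p.2 ≤ 3 * m

theorem swap_mem_sumBand {m : ℕ} {p : ℤ × ℤ} (hp : p ∈ sumBand m) :
    p.swap ∈ sumBand m := by
  simp only [sumBand, mem_filter, mem_product, mem_Icc, Prod.fst_swap, Prod.snd_swap] at hp ⊢
  omega

theorem card_sumBand_filter_eq (m : ℕ) : #((sumBand m).filter fun p => p.1 = p.2) = m := by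
  have hdiag :
      #((sumBand m).filter fun p => p.1 = p.2) = #(Icc ((m : ℤ) / 2 + 1) (m + m / 2)) :=
    card_nbij' Prod.fst (fun i => (i, i))
      (fun p hp => by
        simp only [sumBand, mem_coe, mem_filter, mem_product, mem_Icc] at hp ⊢
        omega)
      (fun i hi => by
        simp only [sumBand, mem_coe, mem_filter, mem_product, mem_Icc, and_true] at hi ⊢
        omega)
      (fun p hp => by
        simp only [mem_coe, mem_filter] at hp
        exact Prod.ext rfl hp.2)
      (fun i _ => rfl)
  rw [hdiag, Int.card_Icc]
  omega

theorem card_sumBand_row_of_le {m : ℕ} {i : ℤ} (h₁ : 1 ≤ i) (h₂ : i ≤ m) :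
    (#((Icc (1 : ℤ) (2 * m)).filter fun j => m + 1 ≤ i + j ∧ i + j ≤ 3 * m) : ℤ) =
      m + i := by
  rw [show (Icc (1 : ℤ) (2 * m)).filter (fun j => m + 1 ≤ i + j ∧ i + j ≤ 3 * m) =
      Icc (m + 1 - i) (2 * m) by ext; simp only [mem_filter, mem_Icc]; omega, Int.card_Icc]
  omega

theorem card_sumBand_row_of_lt {m : ℕ} {i : ℤ} (h₁ : m < i) (h₂ : i ≤ 2 * m) :
    (#((Icc (1 : ℤ) (2 * m)).filter fun j => m + 1 ≤ i + j ∧ i + j ≤ 3 * m) : ℤ) =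
      3 * m - i := by
  rw [show (Icc (1 : ℤ) (2 * m)).filter (fun j => m + 1 ≤ i + j ∧ i + j ≤ 3 * m) =
      Icc 1 (3 * m - i) by ext; simp only [mem_filter, mem_Icc]; omega, Int.card_Icc]
  omega

theorem card_sumBand (m : ℕ) : #(sumBand m) = 3 * m ^ 2 := by
  zify
  have hsplit : Icc (1 : ℤ) (2 * m) = Icc 1 (m : ℤ) ∪ Icc ((m : ℤ) + 1) (2 * m) := by
    ext; simp only [mem_union, mem_Icc]; omega
  have hdisj : Disjoint (Icc (1 : ℤ) m) (Icc ((m : ℤ) + 1) (2 * m)) :=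
    disjoint_left.2 fun i h₁ h₂ => by rw [mem_Icc] at h₁ h₂; omega
  have hgauss₁ := Int.two_mul_sum_Icc_id (a := 1) (b := m) (by omega)
  have hgauss₂ := Int.two_mul_sum_Icc_id (a := m + 1) (b := 2 * m) (by omega)
  rw [sumBand, card_filter_product_eq_sum, Nat.cast_sum]
  nth_rw 1 [hsplit] -- split the range of `i` only, not the rows
  rw [sum_union hdisj,
    sum_congr rfl fun i hi => card_sumBand_row_of_le (mem_Icc.1 hi).1 (mem_Icc.1 hi).2,
    sum_congr rfl fun i hi => card_sumBand_row_of_lt (mem_Icc.1 hi).1 (mem_Icc.1 hi).2,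
    sum_add_distrib, sum_sub_distrib, sum_const, sum_const, Int.card_Icc, Int.card_Icc,
    nsmul_eq_mul, nsmul_eq_mul, Int.toNat_of_nonneg (by omega), Int.toNat_of_nonneg (by omega)]
  linarith

theorem card_triples_eq_card_sumBand_filter_lt {n m : ℕ} (hnm : n = m + m) :
    #(((Icc (1:ℤ) n) ×ˢ (Icc (1:ℤ) n) ×ˢ (Icc (1:ℤ) n)).filter
        (fun t => t.1 < t.2.1 ∧ (n : ℤ) + 2 * (t.2.2 - t.1 - t.2.1) + 1 = 1))
      = #((sumBand m).filter fun p => p.1 < p.2) := by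
  subst hnm
  refine card_nbij' (fun t => (t.1, t.2.1)) (fun p => (p.1, p.2, p.1 + p.2 - m)) ?_ ?_ ?_ ?_
  · intro t ht
    simp only [sumBand, mem_coe, mem_filter, mem_product, mem_Icc] at ht ⊢
    omega
  · intro p hp
    simp only [sumBand, mem_coe, mem_filter, mem_product, mem_Icc] at hp ⊢
    omega
  · rintro ⟨i, j, s⟩ ht
    simp only [mem_coe, mem_filter] at ht
    simp only [Prod.mk.injEq, true_and]
    omega
  · intro p _
    rfl

theorem stmt4_general (n : ℕ) (hev : Even n) :
    ((((Finset.Icc (1:ℤ) n) ×ˢ (Finset.Icc (1:ℤ) n) ×ˢ (Finset.Icc (1:ℤ) n)).filter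
        (fun t => t.1 < t.2.1 ∧ (n : ℤ) + 2 * (t.2.2 - t.1 - t.2.1) + 1 = 1)).card : ℚ)
      = (n * (3 * n - 2)) / 8 := by
  obtain ⟨m, hnm⟩ := hev
  rw [card_triples_eq_card_sumBand_filter_lt hnm, hnm]
  have hcount := two_mul_card_filter_lt_add_card_filter_eq (sumBand m) fun _ => swap_mem_sumBand
  rw [card_sumBand_filter_eq, card_sumBand] at hcount
  replace hcount := congrArg (Nat.cast : ℕ → ℚ) hcount
  push_cast at hcount
  push_cast
  linear_combination hcount / 2

/-- For `n` even, the number of triples `(i,j,s)`, `1 ≤ i < j ≤ n`, `1 ≤ s ≤ n`, with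
`n + 2(s - i - j) + 1 = 1` equals `n(3n-2)/8`. -/
theorem stmt4 (n : ℕ) (hn : 1 ≤ n) (hev : Even n) :
    ((((Finset.Icc (1:ℤ) n) ×ˢ (Finset.Icc (1:ℤ) n) ×ˢ (Finset.Icc (1:ℤ) n)).filter
        (fun t => t.1 < t.2.1 ∧ (n : ℤ) + 2 * (t.2.2 - t.1 - t.2.1) + 1 = 1)).card : ℚ)
      = (n * (3 * n - 2)) / 8 :=
  stmt4_general n hev
end

section
/- Let n ≥ 1 be odd. The number of triples (i,j,s) with 1 ≤ i < j ≤ n, 1 ≤ s ≤ n and n + 2(s - i - j) + 1 = 0 equals (3n² - 4n + 1)/8 + ⌊(n+1)/4⌋. -/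
/-!
Writing `n = 2m + 1`, the equation forces `s = i + j - (m + 1)`, so the triples correspond to the
pairs `1 ≤ i < j ≤ n` whose sum lies in the window `m + 1 < i + j < 3m + 3`. Among all `n(n-1)/2`
pairs, the reflection `(i, j) ↦ (n + 1 - j, n + 1 - i)` matches those below the window with those
above it, and the pairs with `i + j ≤ L` number `⌊(L-1)/2⌋ ⌊L/2⌋`, since the sum `k` is attained
`⌊(k-1)/2⌋` times. Hence the count is `m(2m+1) - 2 ⌊m/2⌋ ⌊(m+1)/2⌋`.
-/

open Finset

noncomputable def increasingPairs (N : ℤ) : Finset (ℤ × ℤ) :=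
  (Icc 1 N ×ˢ Icc 1 N).filter fun p => p.1 < p.2

theorem mem_increasingPairs {N : ℤ} {p : ℤ × ℤ} :
    p ∈ increasingPairs N ↔ 1 ≤ p.1 ∧ p.1 < p.2 ∧ p.2 ≤ N := by
  simp only [increasingPairs, mem_filter, mem_product, mem_Icc]
  omega

theorem card_increasingPairs_succ (N : ℤ) :
    (increasingPairs (N + 1)).card = (increasingPairs N).card + (Icc 1 N).card := by
  rw [← card_filter_add_card_filter_not (fun p : ℤ × ℤ => p.2 = N + 1), add_comm]
  congr 1
  · congr 1
    ext p
    simp only [mem_filter, mem_increasingPairs]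
    omega
  · refine card_nbij' Prod.fst (fun i => (i, N + 1)) ?_ ?_ ?_ ?_ <;> intro p hp <;>
      simp only [mem_coe, mem_filter, mem_increasingPairs, mem_Icc, Prod.ext_iff, and_true,
        true_and] at hp ⊢ <;> omega

theorem two_mul_card_increasingPairs {N : ℤ} (hN : 0 ≤ N) :
    2 * ((increasingPairs N).card : ℤ) = N * (N - 1) := by
  induction N, hN using Int.leInduction with
  | base => simp [increasingPairs]
  | succ N hN ih =>
    rw [card_increasingPairs_succ, Int.card_Icc, Nat.cast_add, Int.toNat_of_nonneg (by omega)]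
    linear_combination ih

theorem card_filter_sum_eq {N k : ℤ} (hk : k ≤ N + 1) :
    ((increasingPairs N).filter fun p => p.1 + p.2 = k).card = (Icc 1 ((k - 1) / 2)).card := by
  refine card_nbij' Prod.fst (fun i => (i, k - i)) ?_ ?_ ?_ ?_ <;> intro p hp <;>
    simp only [mem_coe, mem_filter, mem_increasingPairs, mem_Icc, Prod.ext_iff, true_and]
      at hp ⊢ <;> omega

theorem card_filter_sum_le {N L : ℤ} (hL : 1 ≤ L) (hLN : L ≤ N + 1) :
    (((increasingPairs N).filter fun p => p.1 + p.2 ≤ L).card : ℤ) = (L - 1) / 2 * (L / 2) := by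
  induction L, hL using Int.leInduction with
  | base =>
    rw [Nat.cast_eq_zero.mpr]
    · norm_num
    · rw [card_eq_zero, filter_eq_empty_iff]
      intro p hp
      rw [mem_increasingPairs] at hp
      omega
  | succ L hL ih =>
    have hsplit : ((increasingPairs N).filter fun p => p.1 + p.2 ≤ L + 1) =
        ((increasingPairs N).filter fun p => p.1 + p.2 ≤ L) ∪
          ((increasingPairs N).filter fun p => p.1 + p.2 = L + 1) := by
      rw [← filter_or]
      exact filter_congr fun p _ => by omega
    rw [hsplit, card_union_of_disjoint (disjoint_filter.mpr fun p _ h => by omega),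
      card_filter_sum_eq hLN, Nat.cast_add, ih (by omega), Int.card_Icc,
      Int.toNat_of_nonneg (by omega)]
    have h : (L + 1) / 2 = (L - 1) / 2 + 1 := by omega
    rw [add_sub_cancel_right, h, add_sub_cancel_right]
    ring

theorem card_filter_le_sum_eq (N L : ℤ) :
    ((increasingPairs N).filter fun p => 2 * N + 2 - L ≤ p.1 + p.2).card =
      ((increasingPairs N).filter fun p => p.1 + p.2 ≤ L).card := by
  refine card_nbij' (fun p => (N + 1 - p.2, N + 1 - p.1)) (fun p => (N + 1 - p.2, N + 1 - p.1))
    ?_ ?_ ?_ ?_ <;> intro p hp <;>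
    simp only [mem_coe, mem_filter, mem_increasingPairs, Prod.ext_iff] at hp ⊢ <;> omega

theorem card_filter_sum_mem_Ioo_add {N L : ℤ} (hLN : L ≤ N) :
    ((increasingPairs N).filter fun p => L < p.1 + p.2 ∧ p.1 + p.2 < 2 * N + 2 - L).card +
      2 * ((increasingPairs N).filter fun p => p.1 + p.2 ≤ L).card =
      (increasingPairs N).card := by
  have hcover : increasingPairs N =
      ((increasingPairs N).filter fun p => L < p.1 + p.2 ∧ p.1 + p.2 < 2 * N + 2 - L) ∪
        ((increasingPairs N).filter fun p => p.1 + p.2 ≤ L) ∪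
        ((increasingPairs N).filter fun p => 2 * N + 2 - L ≤ p.1 + p.2) := by
    rw [← filter_or, ← filter_or, filter_true_of_mem fun p _ => by omega]
  have hdisj {P Q : ℤ × ℤ → Prop} [DecidablePred P] [DecidablePred Q] (h : ∀ p, P p → ¬ Q p) :
      Disjoint ((increasingPairs N).filter P) ((increasingPairs N).filter Q) :=
    disjoint_filter.mpr fun p _ => h p
  conv_rhs => rw [hcover]
  rw [card_union_of_disjoint (disjoint_union_left.mpr ⟨hdisj fun p h => by omega,
      hdisj fun p h => by omega⟩), card_union_of_disjoint (hdisj fun p h => by omega),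
    card_filter_le_sum_eq]
  ring

theorem card_filter_triples_eq {N M : ℤ} (hN : N = 2 * M + 1) :
    ((Icc 1 N ×ˢ Icc 1 N ×ˢ Icc 1 N).filter
        fun t => t.1 < t.2.1 ∧ N + 2 * (t.2.2 - t.1 - t.2.1) + 1 = 0).card =
      ((increasingPairs N).filter
        fun p => M + 1 < p.1 + p.2 ∧ p.1 + p.2 < 2 * N + 2 - (M + 1)).card := by
  refine card_nbij' (fun t => (t.1, t.2.1)) (fun p => (p.1, p.2, p.1 + p.2 - (M + 1)))
    ?_ ?_ ?_ ?_ <;> intro t ht <;>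
    simp only [mem_coe, mem_filter, mem_product, mem_increasingPairs, mem_Icc, Prod.ext_iff,
      true_and] at ht ⊢ <;> omega

theorem card_filter_triples_eq_of_odd {M : ℤ} (hM : 0 ≤ M) :
    (((Icc 1 (2 * M + 1) ×ˢ Icc 1 (2 * M + 1) ×ˢ Icc 1 (2 * M + 1)).filter
        fun t => t.1 < t.2.1 ∧ 2 * M + 1 + 2 * (t.2.2 - t.1 - t.2.1) + 1 = 0).card : ℤ) =
      M * (2 * M + 1) - 2 * (M / 2 * ((M + 1) / 2)) := by
  have hwindow := card_filter_sum_mem_Ioo_add (N := 2 * M + 1) (L := M + 1) (by omega)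
  rw [← card_filter_triples_eq rfl] at hwindow
  have htotal := two_mul_card_increasingPairs (N := 2 * M + 1) (by omega)
  have hlow := card_filter_sum_le (N := 2 * M + 1) (L := M + 1) (by omega) (by omega)
  rw [add_sub_cancel_right] at hlow
  zify at hwindow
  linarith

theorem stmt5_general (n : ℕ) (hodd : Odd n) :
    ((((Finset.Icc (1:ℤ) n) ×ˢ (Finset.Icc (1:ℤ) n) ×ˢ (Finset.Icc (1:ℤ) n)).filter
        (fun t => t.1 < t.2.1 ∧ (n : ℤ) + 2 * (t.2.2 - t.1 - t.2.1) + 1 = 0)).card : ℚ)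
      = (3 * n ^ 2 - 4 * n + 1) / 8 + ((n + 1) / 4 : ℕ) := by
  obtain ⟨m, rfl⟩ := hodd
  push_cast
  rw [← Int.cast_natCast, card_filter_triples_eq_of_odd (by positivity)]
  rcases Nat.even_or_odd' m with ⟨a, rfl | rfl⟩
  · rw [show (2 * (2 * a) + 1 + 1) / 4 = a by omega]
    push_cast
    rw [show 2 * (a : ℤ) / 2 = a by omega, show (2 * (a : ℤ) + 1) / 2 = a by omega]
    push_cast
    ring
  · rw [show (2 * (2 * a + 1) + 1 + 1) / 4 = a + 1 by omega]
    push_cast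
    rw [show (2 * (a : ℤ) + 1) / 2 = a by omega, show (2 * (a : ℤ) + 1 + 1) / 2 = a + 1 by omega]
    push_cast
    ring

/-- For `n` odd, the number of triples `(i,j,s)`, `1 ≤ i < j ≤ n`, `1 ≤ s ≤ n`, with
`n + 2(s - i - j) + 1 = 0` equals `(3n² - 4n + 1)/8 + ⌊(n+1)/4⌋`. -/
theorem stmt5 (n : ℕ) (hn : 1 ≤ n) (hodd : Odd n) :
    ((((Finset.Icc (1:ℤ) n) ×ˢ (Finset.Icc (1:ℤ) n) ×ˢ (Finset.Icc (1:ℤ) n)).filter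
        (fun t => t.1 < t.2.1 ∧ (n : ℤ) + 2 * (t.2.2 - t.1 - t.2.1) + 1 = 0)).card : ℚ)
      = (3 * n ^ 2 - 4 * n + 1) / 8 + ((n + 1) / 4 : ℕ) :=
  stmt5_general n hodd
end

section
/- Let n, m ≥ 1 with n odd and n < 2m + 1. The number of triples (i,j,s) with 1 ≤ i ≤ n, 1 ≤ j ≤ m, 1 ≤ s ≤ m such that (-m + 2s - 1) - (-n + 2i - 1) - (-m + 2j - 1) = 0 equals (4nm - n² + 1)/4. -/
/-!
Write `n = 2r + 1` and `c = r + 1`. The defining equation says `s = j + (i - c)`, so for fixed `i`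
the admissible `j` are those with `j` and `j + (i - c)` both in `[1, m]`; there are
`m - |i - c|` of them because `|i - c| ≤ r < m`. Summing over the `2r + 1` values of `i`,
symmetric about `c`, gives `(2r + 1) m - r (r + 1)`, which is `(4nm - n² + 1)/4`.
-/

open Finset

theorem Finset.card_filter_product_eq_add {I J : Finset ℤ} (f : ℤ → ℤ) :
    #{t ∈ I ×ˢ J ×ˢ J | t.2.2 = t.2.1 + f t.1} = ∑ i ∈ I, #{j ∈ J | j + f i ∈ J} := by
  simp only [card_filter, sum_product, sum_ite_eq']

namespace Int

theorem card_filter_add_mem_Icc (a b d : ℤ) :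
    #{j ∈ Icc a b | j + d ∈ Icc a b} = (b + 1 - a - |d|).toNat := by
  have hfilter : {j ∈ Icc a b | j + d ∈ Icc a b} = Icc (max a (a - d)) (min b (b - d)) := by
    ext j
    simp only [mem_filter, mem_Icc, le_min_iff, max_le_iff]
    omega
  rw [hfilter, card_Icc]
  rcases le_total d 0 with hd | hd
  · rw [abs_of_nonpos hd, max_eq_right (by omega), min_eq_left (by omega)]
    congr 1; ring
  · rw [abs_of_nonneg hd, max_eq_left (by omega), min_eq_right (by omega)]
    congr 1; ring

theorem sum_abs_sub_Icc (c : ℤ) (r : ℕ) :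
    ∑ i ∈ Icc (c - r) (c + r), |i - c| = r * (r + 1) := by
  induction r with
  | zero => simp
  | succ r ih =>
    have hIcc : Icc (c - (r + 1 : ℕ)) (c + (r + 1 : ℕ))
        = insert (c - (r + 1)) (insert (c + (r + 1)) (Icc (c - r) (c + r))) := by
      ext x
      simp only [mem_Icc, mem_insert]
      omega
    rw [hIcc, sum_insert (by simp only [mem_insert, mem_Icc]; omega),
      sum_insert (by simp only [mem_Icc]; omega), ih]
    rw [abs_of_nonpos (by omega), abs_of_nonneg (by omega)]
    push_cast
    ring

theorem sum_sub_abs_sub_Icc (c m : ℤ) (r : ℕ) :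
    ∑ i ∈ Icc (c - r) (c + r), (m - |i - c|) = (2 * r + 1) * m - r * (r + 1) := by
  rw [sum_sub_distrib, sum_const, card_Icc, sum_abs_sub_Icc, nsmul_eq_mul,
    show c + r + 1 - (c - r) = 2 * r + 1 by ring]
  norm_cast

end Int

theorem stmt6_general (n m : ℕ) (hodd : Odd n) (h : n < 2 * m + 1) :
    ((((Finset.Icc (1:ℤ) n) ×ˢ (Finset.Icc (1:ℤ) m) ×ˢ (Finset.Icc (1:ℤ) m)).filter
        (fun t => (-(m : ℤ) + 2 * t.2.2 - 1) - (-(n : ℤ) + 2 * t.1 - 1)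
            - (-(m : ℤ) + 2 * t.2.1 - 1) = 0)).card : ℚ)
      = (4 * n * m - n ^ 2 + 1) / 4 := by
  obtain ⟨r, rfl⟩ := hodd
  set c : ℤ := r + 1
  have hIcc : Icc (1 : ℤ) ↑(2 * r + 1) = Icc (c - r) (c + r) := by congr 1 <;> push_cast <;> ring
  have hrow : ∀ i ∈ Icc (c - r) (c + r), (#{j ∈ Icc (1 : ℤ) m | j + (i - c) ∈ Icc (1 : ℤ) m} : ℤ)
      = m - |i - c| := fun i hi => by
    have hdist : |i - c| ≤ r := abs_le.2 ⟨by grind, by grind⟩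
    rw [Int.card_filter_add_mem_Icc, Int.toNat_of_nonneg (by omega)]
    ring
  rw [← Int.cast_natCast,
    filter_congr (q := fun t => t.2.2 = t.2.1 + (t.1 - c)) (fun t _ => by push_cast; omega),
    card_filter_product_eq_add (fun i => i - c), hIcc, Nat.cast_sum, sum_congr rfl hrow,
    Int.sum_sub_abs_sub_Icc]
  push_cast
  ring

/-- For `n` odd, `n < 2m+1`: the number of triples `(i,j,s)` with `1 ≤ i ≤ n`,
`1 ≤ j,s ≤ m` and `(-m+2s-1) - (-n+2i-1) - (-m+2j-1) = 0` equals `(4nm - n² + 1)/4`. -/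
theorem stmt6 (n m : ℕ) (hn : 1 ≤ n) (hm : 1 ≤ m) (hodd : Odd n) (h : n < 2 * m + 1) :
    ((((Finset.Icc (1:ℤ) n) ×ˢ (Finset.Icc (1:ℤ) m) ×ˢ (Finset.Icc (1:ℤ) m)).filter
        (fun t => (-(m : ℤ) + 2 * t.2.2 - 1) - (-(n : ℤ) + 2 * t.1 - 1)
            - (-(m : ℤ) + 2 * t.2.1 - 1) = 0)).card : ℚ)
      = (4 * n * m - n ^ 2 + 1) / 4 :=
  stmt6_general n m hodd h
end

section
/- Let n, m ≥ 1 with n even and n < 2m + 1. The number of triples (i,j,s) with 1 ≤ i ≤ n, 1 ≤ j ≤ m, 1 ≤ s ≤ m such that (-m + 2s - 1) - (-n + 2i - 1) - (-m + 2j - 1) = 1 equals (4nm - n²)/4. -/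
/-!
Writing `n = 2k`, the weight condition says `s = i + j - k`, so a triple is determined by
the pair `(i, j)` in the rectangle `[1, 2k] × [1, m]` subject to `k + 1 ≤ i + j ≤ m + k`.
The two excluded corners, `i + j ≤ k` and `i + j ≥ m + k + 1`, fit together (after
translating the second by `(-k, k - m)`) into the square `[1, k]²`, so the count is
`2km - k² = (4nm - n²)/4`.
-/

open Finset

theorem Finset.card_filter_prod_of_iff_eq_apply {α β γ : Type*} [DecidableEq γ]
    (A : Finset α) (B : Finset β) (C : Finset γ) (f : α → β → γ) (P : α × β × γ → Prop)
    [DecidablePred P] (hP : ∀ t, P t ↔ t.2.2 = f t.1 t.2.1) :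
    ((A ×ˢ B ×ˢ C).filter P).card = ((A ×ˢ B).filter (fun p => f p.1 p.2 ∈ C)).card := by
  refine card_nbij' (fun t => (t.1, t.2.1)) (fun p => (p.1, p.2, f p.1 p.2)) ?_ ?_ ?_ ?_
  · rintro ⟨a, b, c⟩ ht
    simp only [coe_filter, mem_product, Set.mem_ofPred_eq, hP] at ht ⊢
    exact ⟨⟨ht.1.1, ht.1.2.1⟩, ht.2 ▸ ht.1.2.2⟩
  · rintro ⟨a, b⟩ hp
    simp only [coe_filter, mem_product, Set.mem_ofPred_eq, hP, and_true] at hp ⊢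
    exact ⟨hp.1.1, hp.1.2, hp.2⟩
  · rintro ⟨a, b, c⟩ ht
    simp only [coe_filter, Set.mem_ofPred_eq, hP] at ht
    simp [ht.2]
  · intro p _
    rfl

section Band

variable (k m : ℕ)

noncomputable def band : Finset (ℤ × ℤ) :=
  (Icc (1 : ℤ) (2 * k) ×ˢ Icc (1 : ℤ) m).filter (fun p : ℤ × ℤ => p.1 + p.2 - k ∈ Icc (1 : ℤ) m)

variable {k m}

/-- The corner `i + j ≤ k` stays in place; the corner `i + j > m + k`, translated by
`(-k, k - m)`, fills the rest of `[1, k]²`. -/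
theorem card_filter_not_band (hkm : k ≤ m) :
    ((Icc (1 : ℤ) (2 * k) ×ˢ Icc (1 : ℤ) m).filter
      (fun p : ℤ × ℤ => p.1 + p.2 - k ∉ Icc (1 : ℤ) m)).card = k * k := by
  have hsq : (Icc (1 : ℤ) k ×ˢ Icc (1 : ℤ) k).card = k * k := by simp
  rw [← hsq]
  refine card_nbij'
    (fun p => if p.1 + p.2 ≤ k then p else (p.1 - k, p.2 + k - m))
    (fun q => if q.1 + q.2 ≤ k then q else (q.1 + k, q.2 + m - k)) ?_ ?_ ?_ ?_
  · rintro ⟨i, j⟩ hp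
    simp only [coe_filter, mem_product, mem_Icc, Set.mem_ofPred_eq, coe_product, coe_Icc,
      Set.mem_prod] at hp ⊢
    split_ifs <;> simp only [Set.mem_Icc] <;> omega
  · rintro ⟨i, j⟩ hq
    simp only [coe_filter, mem_product, mem_Icc, Set.mem_ofPred_eq, coe_product, coe_Icc,
      Set.mem_prod, Set.mem_Icc] at hq ⊢
    split_ifs <;> omega
  · rintro ⟨i, j⟩ hp
    simp only [coe_filter, mem_product, mem_Icc, Set.mem_ofPred_eq] at hp
    dsimp only
    split_ifs <;> simp only [Prod.mk.injEq] <;> omega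
  · rintro ⟨i, j⟩ hq
    simp only [coe_product, coe_Icc, Set.mem_prod, Set.mem_Icc] at hq
    dsimp only
    split_ifs <;> simp only [Prod.mk.injEq] <;> omega

theorem card_band_add_mul_self (hkm : k ≤ m) : (band k m).card + k * k = 2 * k * m := by
  rw [band, ← card_filter_not_band hkm, card_filter_add_card_filter_not]
  simp only [card_product, Int.card_Icc, add_sub_cancel_right, Int.toNat_natCast]
  rw [show (2 * (k : ℤ)).toNat = 2 * k by omega]

end Band

theorem stmt7_general (n m : ℕ) (hev : Even n) (h : n < 2 * m + 1) :
    ((((Finset.Icc (1:ℤ) n) ×ˢ (Finset.Icc (1:ℤ) m) ×ˢ (Finset.Icc (1:ℤ) m)).filter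
        (fun t => (-(m : ℤ) + 2 * t.2.2 - 1) - (-(n : ℤ) + 2 * t.1 - 1)
            - (-(m : ℤ) + 2 * t.2.1 - 1) = 1)).card : ℚ)
      = (4 * n * m - n ^ 2) / 4 := by
  obtain ⟨k, rfl⟩ := hev
  have hweight : ∀ t : ℤ × ℤ × ℤ, (-(m : ℤ) + 2 * t.2.2 - 1) - (-((k + k : ℕ) : ℤ) + 2 * t.1 - 1)
      - (-(m : ℤ) + 2 * t.2.1 - 1) = 1 ↔ t.2.2 = t.1 + t.2.1 - k := fun t => by push_cast; omega
  have hband : ((band k m).card : ℚ) = 2 * k * m - k * k := by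
    rw [eq_sub_iff_add_eq]
    exact_mod_cast card_band_add_mul_self (k := k) (m := m) (by omega)
  rw [card_filter_prod_of_iff_eq_apply _ _ _ (fun i j : ℤ => i + j - k) _ hweight,
    show ((k + k : ℕ) : ℤ) = 2 * k by push_cast; ring]
  change ((band k m).card : ℚ) = _
  rw [hband]
  push_cast
  ring

/-- For `n` even, `n < 2m+1`: the number of triples `(i,j,s)` with `1 ≤ i ≤ n`,
`1 ≤ j,s ≤ m` and `(-m+2s-1) - (-n+2i-1) - (-m+2j-1) = 1` equals `(4nm - n²)/4`. -/
theorem stmt7 (n m : ℕ) (hn : 1 ≤ n) (hm : 1 ≤ m) (hev : Even n) (h : n < 2 * m + 1) :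
    ((((Finset.Icc (1:ℤ) n) ×ˢ (Finset.Icc (1:ℤ) m) ×ˢ (Finset.Icc (1:ℤ) m)).filter
        (fun t => (-(m : ℤ) + 2 * t.2.2 - 1) - (-(n : ℤ) + 2 * t.1 - 1)
            - (-(m : ℤ) + 2 * t.2.1 - 1) = 1)).card : ℚ)
      = (4 * n * m - n ^ 2) / 4 :=
  stmt7_general n m hev h
end

section
/- For the model Z₃-filiform Lie algebra L = L^{n,m,p}, a bilinear map ψ ∈ Hom(L₀ ∧ L₀, L₀) vanishing on X₀ (i.e. ψ(X₀,·)=0) and with X₀ ∉ Im ψ satisfies the 2-cocycle condition [Xᵢ,ψ(X_j,X_k)] - [X_j,ψ(Xᵢ,X_k)] + [X_k,ψ(Xᵢ,X_j)] - ψ([Xᵢ,X_j],X_k) + ψ([Xᵢ,X_k],X_j) + ψ(Xᵢ,[X_j,X_k]) = 0 for all i,j,k if and only if [X₀, ψ(X_j, X_k)] - ψ([X₀,X_j], X_k) - ψ(X_j, [X₀,X_k]) = 0 for all 1 ≤ j < k ≤ n. -/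
/-!
Write `dψ` for the Chevalley–Eilenberg coboundary of `ψ` with adjoint coefficients and
`(a • ψ) (y, z) = ⁅a, ψ y z⁆ - ψ ⁅a, y⁆ z - ψ y ⁅a, z⁆`. Since `ψ` is alternating, so is `dψ`,
and it suffices to evaluate it on triples of basis vectors in which `X₀` occurs at most in the
first slot. If `ψ (X₀, ·) = 0`, then `dψ (X₀, y, z) = (X₀ • ψ) (y, z)`. If no argument is `X₀`,
every term of `dψ` vanishes: the `Xᵢ` with `i ≥ 1` commute with each other, and hence with the
image of `ψ`, which they span.
-/

open Submodule

theorem LinearMap.IsAlt.of_eq_neg_flip {R M N : Type*} [CommSemiring R] [AddCommMonoid M]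
    [Module R M] [AddCommGroup N] [IsAddTorsionFree N] [Module R N] {B : M →ₗ[R] M →ₗ[R] N}
    (h : ∀ x y, B x y = -B y x) : B.IsAlt :=
  fun x => self_eq_neg.mp (h x x)

theorem lie_eq_zero_of_mem_span {R L M : Type*} [CommRing R] [LieRing L] [LieAlgebra R L]
    [AddCommGroup M] [Module R M] [LieRingModule L M] [LieModule R L M] {s : L} {T : Set M}
    (h : ∀ t ∈ T, ⁅s, t⁆ = 0) {v : M} (hv : v ∈ span R T) : ⁅s, v⁆ = 0 :=
  LinearMap.eqOn_span (f := LieModule.toEnd R L M s) (g := 0) h hv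

section Cochain

variable {R L : Type*} [CommRing R] [LieRing L] [LieAlgebra R L]

def adjointCoboundary (ψ : L →ₗ[R] L →ₗ[R] L) (x y z : L) : L :=
  ⁅x, ψ y z⁆ - ⁅y, ψ x z⁆ + ⁅z, ψ x y⁆ - ψ ⁅x, y⁆ z + ψ ⁅x, z⁆ y + ψ x ⁅y, z⁆

def cochainAction (a : L) (ψ : L →ₗ[R] L →ₗ[R] L) (y z : L) : L :=
  ⁅a, ψ y z⁆ - ψ ⁅a, y⁆ z - ψ y ⁅a, z⁆

variable {ψ : L →ₗ[R] L →ₗ[R] L}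

theorem adjointCoboundary_swap_left (hψ : ψ.IsAlt) (x y z : L) :
    adjointCoboundary ψ y x z = -adjointCoboundary ψ x y z := by
  simp only [adjointCoboundary, ← hψ.neg x y, ← hψ.neg y ⁅x, z⁆, ← hψ.neg x ⁅y, z⁆,
    ← lie_skew x y, map_neg, LinearMap.neg_apply, lie_neg]
  abel

theorem adjointCoboundary_swap_right (hψ : ψ.IsAlt) (x y z : L) :
    adjointCoboundary ψ x z y = -adjointCoboundary ψ x y z := by
  simp only [adjointCoboundary, ← hψ.neg y z, ← lie_skew y z, map_neg, lie_neg]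
  abel

theorem adjointCoboundary_eq_cochainAction (hψ : ψ.IsAlt) {a : L} (ha : ∀ x, ψ a x = 0)
    (y z : L) : adjointCoboundary ψ a y z = cochainAction a ψ y z := by
  simp only [adjointCoboundary, cochainAction, ha, ← hψ.neg y ⁅a, z⁆, lie_zero]
  abel

theorem cochainAction_swap (hψ : ψ.IsAlt) (a y z : L) :
    cochainAction a ψ z y = -cochainAction a ψ y z := by
  simp only [cochainAction, ← hψ.neg y z, ← hψ.neg y ⁅a, z⁆, ← hψ.neg ⁅a, y⁆ z, lie_neg]
  abel

theorem cochainAction_self (hψ : ψ.IsAlt) (a y : L) : cochainAction a ψ y y = 0 := by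
  simp only [cochainAction, hψ.self_eq_zero, lie_zero, ← hψ.neg ⁅a, y⁆ y]
  abel

theorem cochainAction_self_left {a : L} (ha : ∀ x, ψ a x = 0) (z : L) :
    cochainAction a ψ a z = 0 := by
  simp [cochainAction, ha]

theorem adjointCoboundary_eq_zero_of_mem_insert (hψ : ψ.IsAlt) {a : L} {S : Set L}
    (ha : ∀ x, ψ a x = 0) (hS : ∀ s ∈ S, ∀ t ∈ S, ⁅s, t⁆ = 0)
    (him : ∀ x y, ψ x y ∈ span R S) (hact : ∀ y ∈ S, ∀ z ∈ S, cochainAction a ψ y z = 0)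
    {x y z : L} (hx : x ∈ insert a S) (hy : y ∈ insert a S) (hz : z ∈ insert a S) :
    adjointCoboundary ψ x y z = 0 := by
  have hact' : ∀ y ∈ insert a S, ∀ z ∈ insert a S, cochainAction a ψ y z = 0 := by
    rintro y (rfl | hy) z (rfl | hz)
    · exact cochainAction_self_left ha z
    · exact cochainAction_self_left ha z
    · rw [cochainAction_swap hψ, cochainAction_self_left ha, neg_zero]
    · exact hact y hy z hz
  have hfirst : ∀ y z, adjointCoboundary ψ a y z = cochainAction a ψ y z :=
    adjointCoboundary_eq_cochainAction hψ ha
  rcases hx with rfl | hx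
  · rw [hfirst]; exact hact' y hy z hz
  rcases hy with rfl | hy
  · rw [adjointCoboundary_swap_left hψ, hfirst, hact' x (.inr hx) z hz, neg_zero]
  rcases hz with rfl | hz
  · rw [adjointCoboundary_swap_right hψ, adjointCoboundary_swap_left hψ, neg_neg, hfirst,
      hact' x (.inr hx) y (.inr hy)]
  have hcomm : ∀ s ∈ S, ∀ x y, ⁅s, ψ x y⁆ = 0 := fun s hs x y =>
    lie_eq_zero_of_mem_span (hS s hs) (him x y)
  simp [adjointCoboundary, hcomm x hx, hcomm y hy, hcomm z hz, hS x hx y hy, hS x hx z hz,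
    hS y hy z hz]

end Cochain

theorem stmt14_general (n : ℕ)
    (L : Type) [LieRing L] [LieAlgebra ℂ L]
    (X : ℕ → L)
    (hXX0 : ∀ i j, 1 ≤ i → 1 ≤ j → ⁅X i, X j⁆ = 0)
    (ψ : L →ₗ[ℂ] L →ₗ[ℂ] L)
    (hskew : ∀ x y : L, ψ x y = -ψ y x)
    (hψ0 : ∀ x : L, ψ (X 0) x = 0)
    (him : ∀ x y : L, ψ x y ∈ Submodule.span ℂ (X '' Set.Icc 1 n)) :
    (∀ i j k, i ≤ n → j ≤ n → k ≤ n →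
        ⁅X i, ψ (X j) (X k)⁆ - ⁅X j, ψ (X i) (X k)⁆ + ⁅X k, ψ (X i) (X j)⁆
          - ψ ⁅X i, X j⁆ (X k) + ψ ⁅X i, X k⁆ (X j) + ψ (X i) ⁅X j, X k⁆ = 0) ↔
      (∀ j k, 1 ≤ j → j < k → k ≤ n →
        ⁅X 0, ψ (X j) (X k)⁆ - ψ ⁅X 0, X j⁆ (X k) - ψ (X j) ⁅X 0, X k⁆ = 0) := by
  have : IsAddTorsionFree L := .of_isTorsionFree ℂ L
  have hψ : ψ.IsAlt := .of_eq_neg_flip hskew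
  constructor
  · intro hcocycle j k _ _ hk
    rw [← cochainAction, ← adjointCoboundary_eq_cochainAction hψ hψ0]
    exact hcocycle 0 j k (Nat.zero_le n) (by omega) hk
  · intro hact i j k hi hj hk
    have hmem : ∀ i ≤ n, X i ∈ insert (X 0) (X '' Set.Icc 1 n) := fun i hi => by
      rcases Nat.eq_zero_or_pos i with rfl | hi0
      exacts [.inl rfl, .inr ⟨i, ⟨hi0, hi⟩, rfl⟩]
    refine adjointCoboundary_eq_zero_of_mem_insert hψ hψ0 ?_ him ?_ (hmem i hi) (hmem j hj)
      (hmem k hk)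
    · rintro _ ⟨i, hi, rfl⟩ _ ⟨j, hj, rfl⟩
      exact hXX0 i j hi.1 hj.1
    · rintro _ ⟨j, hj, rfl⟩ _ ⟨k, hk, rfl⟩
      rcases lt_trichotomy j k with hjk | rfl | hkj
      · exact hact j k hj.1 hjk hk.2
      · exact cochainAction_self hψ _ _
      · rw [cochainAction_swap hψ, neg_eq_zero]
        exact hact k j hk.1 hkj hj.2

/-- For the model algebra, a skew bilinear map `ψ` on `L₀` vanishing on `X₀` and with
image avoiding `X₀` (i.e. contained in `span{X₁,…,X_n}`) satisfies the full 2-cocycle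
condition iff it satisfies the reduced condition involving only `X₀`. -/
theorem stmt14 (n : ℕ) (hn : 1 ≤ n)
    (L : Type) [LieRing L] [LieAlgebra ℂ L]
    (X : ℕ → L)
    (hXX : ∀ i, 1 ≤ i → i ≤ n - 1 → ⁅X 0, X i⁆ = X (i + 1))
    (hXn : ⁅X 0, X n⁆ = 0)
    (hXX0 : ∀ i j, 1 ≤ i → 1 ≤ j → ⁅X i, X j⁆ = 0)
    (ψ : L →ₗ[ℂ] L →ₗ[ℂ] L)
    (hskew : ∀ x y : L, ψ x y = -ψ y x)
    (hψ0 : ∀ x : L, ψ (X 0) x = 0)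
    (him : ∀ x y : L, ψ x y ∈ Submodule.span ℂ (X '' Set.Icc 1 n)) :
    (∀ i j k, i ≤ n → j ≤ n → k ≤ n →
        ⁅X i, ψ (X j) (X k)⁆ - ⁅X j, ψ (X i) (X k)⁆ + ⁅X k, ψ (X i) (X j)⁆
          - ψ ⁅X i, X j⁆ (X k) + ψ ⁅X i, X k⁆ (X j) + ψ (X i) ⁅X j, X k⁆ = 0) ↔
      (∀ j k, 1 ≤ j → j < k → k ≤ n →
        ⁅X 0, ψ (X j) (X k)⁆ - ψ ⁅X 0, X j⁆ (X k) - ψ (X j) ⁅X 0, X k⁆ = 0) :=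
  stmt14_general n L X hXX0 ψ hskew hψ0 him
end

section
/- Let n be odd, n ≡ 1 (mod 4). The number of triples (i,j,s) of integers with 1 ≤ i < j ≤ n, 1 ≤ s ≤ n and 2(i + j - s) = n + 1 equals (3n² - 4n + 1)/8 + (n-1)/4. -/
/-!
Fibre the triples over `i`: once `i` is fixed, `s = i + j - c` with `2c = n + 1` is forced, so the
fibre is an interval of admissible `j`. For `n = 4k + 1` its length is `2k + i`, `4k + 1 - i`,
`6k + 2 - 2i` and `0` on the four ranges cut out by `k`, `2k + 1` and `3k + 1`, and the four
arithmetic series add up to `6k² + 2k`.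
-/

open Finset

theorem card_triples_eq_sum_card_Icc (n c : ℤ) :
    #{t ∈ Icc 1 n ×ˢ Icc 1 n ×ˢ Icc 1 n | t.1 < t.2.1 ∧ t.1 + t.2.1 - t.2.2 = c} =
      ∑ i ∈ Icc 1 n, #(Icc (max (i + 1) (c + 1 - i)) (min n (c + n - i))) := by
  rw [card_eq_sum_card_fiberwise (f := Prod.fst) (t := Icc 1 n) fun t ht => by
    simp only [coe_filter, mem_product] at ht
    exact ht.1.1]
  refine sum_congr rfl fun i hi => ?_
  rw [mem_Icc] at hi
  refine card_nbij' (fun t => t.2.1) (fun j => (i, j, i + j - c)) ?_ ?_ ?_ ?_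
  all_goals simp only [coe_filter, coe_Icc, Set.mem_Icc, mem_filter, mem_product, mem_Icc,
    max_le_iff, le_min_iff, Set.MapsTo, Set.LeftInvOn, Set.mem_ofPred_eq, Prod.forall,
    Prod.mk.injEq, and_true, true_and, implies_true]
  all_goals intros; omega

theorem sum_range_affine_mul_two (a b : ℤ) (N : ℕ) :
    (∑ x ∈ range N, (a + b * x)) * 2 = N * (2 * a + b * (N - 1)) := by
  induction N with
  | zero => simp
  | succ N ih =>
    rw [sum_range_succ, add_mul, ih]
    push_cast
    ring

theorem sum_card_Icc_of_eq_four_mul_add_one {n c : ℤ} (k : ℕ) (hn : n = 4 * k + 1)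
    (hc : c = 2 * k + 1) :
    ∑ i ∈ Icc 1 n, #(Icc (max (i + 1) (c + 1 - i)) (min n (c + n - i))) = 6 * k ^ 2 + 2 * k := by
  zify
  set g : ℤ → ℤ := fun i => #(Icc (max (i + 1) (c + 1 - i)) (min n (c + n - i)))
  have g_eq (i : ℤ) : g i = (min n (c + n - i) + 1 - max (i + 1) (c + 1 - i)).toNat := by
    simp only [g, Int.card_Icc]
  rw [hn, Int.Icc_eq_finset_map, sum_map]
  simp only [Function.Embedding.trans_apply, Nat.castEmbedding_apply, addLeftEmbedding_apply]
  rw [show (4 * (k : ℤ) + 1 + 1 - 1).toNat = k + (k + 1) + k + k by omega,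
    sum_range_add, sum_range_add, sum_range_add]
  have rising : ∑ x ∈ range k, g (1 + x) = ∑ x ∈ range k, ((2 * k + 1) + 1 * (x : ℤ)) :=
    sum_congr rfl fun x hx => by rw [g_eq, mem_range] at *; omega
  have falling : ∑ x ∈ range (k + 1), g (1 + (k + x : ℕ)) =
      ∑ x ∈ range (k + 1), (3 * k + (-1) * (x : ℤ)) :=
    sum_congr rfl fun x hx => by rw [g_eq, mem_range] at *; omega
  have steep : ∑ x ∈ range k, g (1 + (k + (k + 1) + x : ℕ)) =
      ∑ x ∈ range k, ((2 * k - 2) + (-2) * (x : ℤ)) :=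
    sum_congr rfl fun x hx => by rw [g_eq, mem_range] at *; omega
  have empty : ∑ x ∈ range k, g (1 + (k + (k + 1) + k + x : ℕ)) = 0 :=
    sum_eq_zero fun x hx => by rw [g_eq, mem_range] at *; omega
  rw [rising, falling, steep, empty]
  have := sum_range_affine_mul_two (2 * k + 1) 1 k
  have := sum_range_affine_mul_two (3 * k) (-1) (k + 1)
  have := sum_range_affine_mul_two (2 * k - 2) (-2) k
  push_cast at *
  linarith

theorem stmt15_general (n : ℕ) (h4 : n % 4 = 1) :
    ((((Finset.Icc (1:ℤ) n) ×ˢ (Finset.Icc (1:ℤ) n) ×ˢ (Finset.Icc (1:ℤ) n)).filter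
        (fun t => t.1 < t.2.1 ∧ 2 * (t.1 + t.2.1 - t.2.2) = (n : ℤ) + 1)).card : ℚ)
      = (3 * n ^ 2 - 4 * n + 1) / 8 + ((n : ℚ) - 1) / 4 := by
  obtain ⟨k, rfl⟩ : ∃ k, n = 4 * k + 1 := ⟨n / 4, by omega⟩
  rw [filter_congr fun t _ => and_congr_right fun _ =>
      show _ ↔ t.1 + t.2.1 - t.2.2 = 2 * (k : ℤ) + 1 by push_cast; omega,
    card_triples_eq_sum_card_Icc, sum_card_Icc_of_eq_four_mul_add_one k (by push_cast; ring) rfl]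
  push_cast
  ring

/-- For `n ≡ 1 (mod 4)`: the number of triples `(i,j,s)` with `1 ≤ i < j ≤ n`,
`1 ≤ s ≤ n`, `2(i+j-s) = n+1` equals `(3n²-4n+1)/8 + (n-1)/4`. -/
theorem stmt15 (n : ℕ) (hn : 1 ≤ n) (hodd : Odd n) (h4 : n % 4 = 1) :
    ((((Finset.Icc (1:ℤ) n) ×ˢ (Finset.Icc (1:ℤ) n) ×ˢ (Finset.Icc (1:ℤ) n)).filter
        (fun t => t.1 < t.2.1 ∧ 2 * (t.1 + t.2.1 - t.2.2) = (n : ℤ) + 1)).card : ℚ)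
      = (3 * n ^ 2 - 4 * n + 1) / 8 + ((n : ℚ) - 1) / 4 :=
  stmt15_general n h4
end

section
/- Let n be odd, n ≡ 3 (mod 4). The number of triples (i,j,s) of integers with 1 ≤ i < j ≤ n, 1 ≤ s ≤ n and 2(i + j - s) = n + 1 equals (3n² - 4n + 1)/8 + (n+1)/4. -/
/-! Since `s = i + j - (n + 1) / 2`, a triple is determined by its pair `i < j`, and `1 ≤ s ≤ n`
says `(n + 1) / 2 < i + j ≤ (n + 1) / 2 + n`. Among all `C(n, 2)` pairs, the reflection
`(i, j) ↦ (n + 1 - j, n + 1 - i)` matches the pairs whose sum is too large with those whose sum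
is too small, and for `n + 1 = 4m` there are `2 C(m, 2)` pairs with `i + j ≤ 2m`. So the count
is `C(n, 2) - 4 C(m, 2) = (3n² - 2n + 3) / 8`. -/

open Finset

theorem card_filter_triple_eq_card_filter_pair {α : Type*} [AddCommGroup α] [DecidableEq α]
    (s : Finset α) (r : α → α → Prop) [DecidableRel r] (c : α) :
    #{t ∈ s ×ˢ s ×ˢ s | r t.1 t.2.1 ∧ t.1 + t.2.1 - t.2.2 = c} =
      #{p ∈ s ×ˢ s | r p.1 p.2 ∧ p.1 + p.2 - c ∈ s} := by
  refine card_nbij' (fun t ↦ (t.1, t.2.1)) (fun p ↦ (p.1, p.2, p.1 + p.2 - c))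
    ?_ ?_ ?_ ?_
  · rintro ⟨i, j, k⟩ ht
    simp only [coe_filter, mem_product, Set.mem_ofPred_eq] at ht ⊢
    obtain ⟨⟨hi, hj, hk⟩, hr, rfl⟩ := ht
    simpa [hi, hj, hr] using hk
  · rintro ⟨i, j⟩ hp
    simp only [coe_filter, mem_product, Set.mem_ofPred_eq] at hp ⊢
    simp_all
  · rintro ⟨i, j, k⟩ ht
    simp only [coe_filter, mem_product, Set.mem_ofPred_eq] at ht
    obtain ⟨-, -, rfl⟩ := ht
    simp
  · rintro ⟨i, j⟩ -
    rfl

noncomputable def pairsWithSum (n : ℤ) (P : ℤ → Prop) [DecidablePred P] :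
    Finset (ℤ × ℤ) :=
  {p ∈ Icc 1 n ×ˢ Icc 1 n | p.1 < p.2 ∧ P (p.1 + p.2)}

theorem card_Icc_product_filter_lt (n : ℤ) :
    #{p ∈ Icc 1 n ×ˢ Icc 1 n | p.1 < p.2} = n.toNat.choose 2 := by
  rw [card_product_filter_lt, Int.card_Icc, add_sub_cancel_right]

theorem card_pairsWithSum_partition (n c : ℤ) :
    #(pairsWithSum n (· - c ∈ Icc 1 n)) + #(pairsWithSum n (· ≤ c)) +
      #(pairsWithSum n (c + n < ·)) = n.toNat.choose 2 := by
  set S := {p ∈ Icc 1 n ×ˢ Icc 1 n | p.1 < p.2}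
  have hS (P : ℤ → Prop) [DecidablePred P] : pairsWithSum n P = {p ∈ S | P (p.1 + p.2)} := by
    rw [pairsWithSum, filter_filter]
  have hgood : {p ∈ S | p.1 + p.2 - c ∈ Icc 1 n} =
      {p ∈ {p ∈ S | ¬p.1 + p.2 ≤ c} | p.1 + p.2 ≤ c + n} := by
    ext p
    simp only [mem_filter, mem_Icc]
    grind
  have hhigh : {p ∈ S | c + n < p.1 + p.2} =
      {p ∈ {p ∈ S | ¬p.1 + p.2 ≤ c} | ¬p.1 + p.2 ≤ c + n} := by
    ext p
    simp only [mem_filter]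
    grind
  rw [hS, hS, hS, hgood, hhigh, ← card_Icc_product_filter_lt,
    ← card_filter_add_card_filter_not (s := S) (fun p ↦ p.1 + p.2 ≤ c),
    ← card_filter_add_card_filter_not (s := {p ∈ S | ¬p.1 + p.2 ≤ c})
      (fun p ↦ p.1 + p.2 ≤ c + n)]
  ring

theorem card_pairsWithSum_reflect (n : ℤ) (P Q : ℤ → Prop) [DecidablePred P] [DecidablePred Q]
    (h : ∀ σ, P σ ↔ Q (2 * (n + 1) - σ)) :
    #(pairsWithSum n P) = #(pairsWithSum n Q) := by
  refine card_nbij' (fun p ↦ (n + 1 - p.2, n + 1 - p.1)) (fun p ↦ (n + 1 - p.2, n + 1 - p.1))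
    ?_ ?_ ?_ ?_
  · rintro ⟨i, j⟩ hp
    simp only [pairsWithSum, coe_filter, mem_product, mem_Icc, Set.mem_ofPred_eq, h] at hp ⊢
    refine ⟨by omega, by omega, ?_⟩
    convert hp.2.2 using 2; ring
  · rintro ⟨i, j⟩ hp
    simp only [pairsWithSum, coe_filter, mem_product, mem_Icc, Set.mem_ofPred_eq, h] at hp ⊢
    refine ⟨by omega, by omega, ?_⟩
    convert hp.2.2 using 2; ring
  · rintro ⟨i, j⟩ -
    simp
  · rintro ⟨i, j⟩ -
    simp

theorem card_pairsWithSum_le_two_mul (n : ℤ) (m : ℕ) (hm : 2 * m ≤ n + 1) :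
    #(pairsWithSum n (· ≤ 2 * m)) = 2 * m.choose 2 := by
  set L := pairsWithSum n (· ≤ 2 * m)
  have hsmall :
      {p ∈ L | p.2 ≤ (m : ℤ)} = {p ∈ Icc 1 (m : ℤ) ×ˢ Icc 1 (m : ℤ) | p.1 < p.2} := by
    ext ⟨i, j⟩
    simp only [L, pairsWithSum, mem_filter, mem_product, mem_Icc]
    omega
  have hlarge : #{p ∈ L | ¬p.2 ≤ (m : ℤ)} =
      #{p ∈ Icc 1 (m : ℤ) ×ˢ Icc 1 (m : ℤ) | p.1 < p.2} := by
    refine card_nbij' (fun p ↦ (p.1, 2 * m + 1 - p.2)) (fun p ↦ (p.1, 2 * m + 1 - p.2))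
      ?_ ?_ ?_ ?_
    · rintro ⟨i, j⟩ hp
      simp only [L, pairsWithSum, coe_filter, mem_filter, mem_product, mem_Icc,
        Set.mem_ofPred_eq] at hp ⊢
      omega
    · rintro ⟨i, j⟩ hp
      simp only [L, pairsWithSum, coe_filter, mem_filter, mem_product, mem_Icc,
        Set.mem_ofPred_eq] at hp ⊢
      omega
    · rintro ⟨i, j⟩ -
      simp
    · rintro ⟨i, j⟩ -
      simp
  rw [← card_filter_add_card_filter_not (s := L) (fun p ↦ p.2 ≤ (m : ℤ)), hsmall, hlarge,
    card_Icc_product_filter_lt, Int.toNat_natCast]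
  ring

theorem stmt16_general (n : ℕ) (h4 : n % 4 = 3) :
    ((((Finset.Icc (1:ℤ) n) ×ˢ (Finset.Icc (1:ℤ) n) ×ˢ (Finset.Icc (1:ℤ) n)).filter
        (fun t => t.1 < t.2.1 ∧ 2 * (t.1 + t.2.1 - t.2.2) = (n : ℤ) + 1)).card : ℚ)
      = (3 * n ^ 2 - 4 * n + 1) / 8 + ((n : ℚ) + 1) / 4 := by
  obtain ⟨k, rfl⟩ : ∃ k, n = 4 * k + 3 := ⟨n / 4, by omega⟩
  set N : ℤ := ((4 * k + 3 : ℕ) : ℤ)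
  set c : ℤ := 2 * ((k + 1 : ℕ) : ℤ)
  have htriples : #{t ∈ Icc 1 N ×ˢ Icc 1 N ×ˢ Icc 1 N |
      t.1 < t.2.1 ∧ 2 * (t.1 + t.2.1 - t.2.2) = N + 1} =
        #(pairsWithSum N (· - c ∈ Icc 1 N)) := by
    rw [filter_congr fun t _ ↦ show _ ↔ t.1 < t.2.1 ∧ t.1 + t.2.1 - t.2.2 = c by omega]
    exact card_filter_triple_eq_card_filter_pair _ _ c
  have hhigh : #(pairsWithSum N (c + N < ·)) = #(pairsWithSum N (· ≤ c)) :=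
    card_pairsWithSum_reflect N _ _ fun σ ↦ by omega
  have hcount := card_pairsWithSum_partition N c
  rw [hhigh, card_pairsWithSum_le_two_mul N (k + 1) (by omega), Int.toNat_natCast] at hcount
  rw [htriples]
  have := congrArg (Nat.cast : ℕ → ℚ) hcount
  push_cast [Nat.cast_choose_two] at this ⊢
  linarith

/-- For `n ≡ 3 (mod 4)`: the number of triples `(i,j,s)` with `1 ≤ i < j ≤ n`,
`1 ≤ s ≤ n`, `2(i+j-s) = n+1` equals `(3n²-4n+1)/8 + (n+1)/4`. -/
theorem stmt16 (n : ℕ) (hn : 1 ≤ n) (hodd : Odd n) (h4 : n % 4 = 3) :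
    ((((Finset.Icc (1:ℤ) n) ×ˢ (Finset.Icc (1:ℤ) n) ×ˢ (Finset.Icc (1:ℤ) n)).filter
        (fun t => t.1 < t.2.1 ∧ 2 * (t.1 + t.2.1 - t.2.2) = (n : ℤ) + 1)).card : ℚ)
      = (3 * n ^ 2 - 4 * n + 1) / 8 + ((n : ℚ) + 1) / 4 :=
  stmt16_general n h4
end
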